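/- arXiv:2204.11429 — 4 statements merged into one kernel-verified Lean document; each statement's English description precedes it below -/
import Mathlib

section
/- If A ⊆ ℕ is a C-set, then for every α > 0 and every 0 < γ < 1 the set g_{α,γ}(A) = {⌊nα + γ⌋ : n ∈ A} is a C-set. -/
open Set Filter Topology

attribute [local instance] Ultrafilter.add

/-- The nonhomogeneous spectrum function `g_{α,γ}(n) = ⌊nα + γ⌋`. -/
noncomputable def gFun (α γ : ℝ) (n : ℕ) : ℕ := (⌊(n : ℝ) * α + γ⌋).toNat

/-- The image `g_{α,γ}(A) = {⌊nα + γ⌋ : n ∈ A}` of a set `A ⊆ ℕ` under the spectrum map. -/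
noncomputable def gImage (α γ : ℝ) (A : Set ℕ) : Set ℕ := gFun α γ '' A

/-- A Furstenberg family: a nonempty collection of nonempty subsets of ℕ (the positive
integers), hereditary upwards. -/
def IsFurstenbergFamily (F : Set (Set ℕ)) : Prop :=
  F.Nonempty ∧ (∀ A ∈ F, A.Nonempty) ∧ ∀ A B : Set ℕ, A ∈ F → A ⊆ B → B ∈ F

/-- Translation `+` invariance of a family. -/
def TranslationInvariant (F : Set (Set ℕ)) : Prop :=
  ∀ n : ℕ, ∀ A ∈ F, (fun m => n + m) '' A ∈ F

/-- The Ramsey property of a family. -/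
def HasRamseyProperty (F : Set (Set ℕ)) : Prop :=
  ∀ A B : Set ℕ, A ∪ B ∈ F → A ∈ F ∨ B ∈ F

/-- `N((x,y), U×U) = {n ∈ ℕ : Tⁿx ∈ U and Tⁿy ∈ U}` (ℕ being the positive integers). -/
def retTimes2 {X : Type*} (T : X → X) (x y : X) (U : Set X) : Set ℕ :=
  {n : ℕ | 0 < n ∧ T^[n] x ∈ U ∧ T^[n] y ∈ U}

/-- `N(x, U) = {n ∈ ℕ : Tⁿx ∈ U}` (ℕ being the positive integers). -/
def retTimes1 {X : Type*} (T : X → X) (x : X) (U : Set X) : Set ℕ :=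
  {n : ℕ | 0 < n ∧ T^[n] x ∈ U}

/-- `x` is `F`-strongly proximal to `y`: for every neighborhood `U` of `y`,
`N((x,y),U×U) ∈ F`. -/
def StronglyProximal {X : Type*} [TopologicalSpace X] (F : Set (Set ℕ))
    (T : X → X) (x y : X) : Prop :=
  ∀ U ∈ nhds y, retTimes2 T x y U ∈ F

/-- `A` is an essential `F`-set: witnessed by a dynamical system (compact metric space with a
continuous self-map), a pair of points `x` `F`-strongly proximal to `y`, and a neighborhood
`U` of `y` with `N((x,y),U×U) ⊆ A`. -/
def IsEssentialSet (F : Set (Set ℕ)) (A : Set ℕ) : Prop :=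
  ∃ (X : Type) (_ : MetricSpace X) (_ : CompactSpace X) (T : X → X),
    Continuous T ∧ ∃ x y : X, StronglyProximal F T x y ∧
      ∃ U ∈ nhds y, retTimes2 T x y U ⊆ A

/-- The return-time set of the pair `((x,γ),(y,γ))` to the neighborhood `U × (γ-ε, γ+ε)`
in the suspension `(Y, F_{α⁻¹})`, expressed on the base:
`{n : F_{α⁻¹}ⁿ(x,γ) ∈ U × (γ-ε,γ+ε) and F_{α⁻¹}ⁿ(y,γ) ∈ U × (γ-ε,γ+ε)}`, where
`F_{α⁻¹}ⁿ(x,t) = (T^{⌊n/α+t⌋}x, n/α+t-⌊n/α+t⌋)`. -/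
noncomputable def suspRet {X : Type*} (T : X → X) (x y : X) (U : Set X)
    (α γ ε : ℝ) : Set ℕ :=
  {n : ℕ | 0 < n ∧ T^[(⌊(n : ℝ) / α + γ⌋).toNat] x ∈ U ∧
    T^[(⌊(n : ℝ) / α + γ⌋).toNat] y ∈ U ∧
    γ - ε < (n : ℝ) / α + γ - ⌊(n : ℝ) / α + γ⌋ ∧
    (n : ℝ) / α + γ - ⌊(n : ℝ) / α + γ⌋ < γ + ε}

/-- The pair `(x,y)` has the `F`-suspension-proximality property at level `γ` for the
suspension `(Y, F_{α⁻¹})` of `(X,T)`: for every neighborhood `U` of `y` and every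
`0 < ε < min{γ, 1-γ}`, the corresponding return-time set in the suspension belongs to `F`
(i.e. `(x,γ)` is `F`-strongly proximal to `(y,γ)` in `(Y, F_{α⁻¹})`). -/
def SuspensionProximal {X : Type*} [TopologicalSpace X] (F : Set (Set ℕ))
    (T : X → X) (x y : X) (α γ : ℝ) : Prop :=
  ∀ U ∈ nhds y, ∀ ε : ℝ, 0 < ε → ε < min γ (1 - γ) → suspRet T x y U α γ ε ∈ F

/-- `A ⊆ ℕ` is an IP-set. -/
def IsIPSet (A : Set ℕ) : Prop :=
  ∃ p : ℕ → ℕ, (∀ n, 0 < p n) ∧ ∀ s : Finset ℕ, s.Nonempty → ∑ n ∈ s, p n ∈ A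

/-- `A ⊆ ℕ` is an AP-set: it contains arbitrarily long arithmetic progressions. -/
def IsAPSet (A : Set ℕ) : Prop :=
  ∀ m : ℕ, ∃ a b : ℕ, 0 < a ∧ 0 < b ∧ ∀ k < m, a + k * b ∈ A

/-- `A ⊆ ℕ` is a J-set. -/
def IsJSet (A : Set ℕ) : Prop :=
  ∀ (m : ℕ) (p : Fin m → ℕ → ℕ), (∀ i n, 0 < p i n) →
    ∃ r : ℕ, 0 < r ∧ ∃ s : Finset ℕ, s.Nonempty ∧ ∀ i : Fin m, r + ∑ n ∈ s, p i n ∈ A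

/-- `A ⊆ ℕ` is piecewise syndetic: for some `ℓ`, the union `⋃_{i=0}^{ℓ} (A−i)` contains
arbitrarily long intervals of consecutive integers. -/
def IsPiecewiseSyndetic (A : Set ℕ) : Prop :=
  ∃ l : ℕ, ∀ m : ℕ, ∃ n : ℕ, 0 < n ∧ ∀ k, n ≤ k → k ≤ n + m → ∃ i ≤ l, k + i ∈ A

/-- The upper density `d*(A) = limsup_{n→∞} |A ∩ [1,n]| / n`. -/
noncomputable def upperDensity (A : Set ℕ) : ℝ :=
  Filter.limsup (fun n : ℕ => ((A ∩ Set.Icc 1 n).ncard : ℝ) / n) Filter.atTop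

/-- The upper Banach density
`BD*(A) = limsup_{(n−m)→∞} |A ∩ [m,n]| / (n−m+1) = limsup_{L→∞} sup_m |A ∩ [m,m+L]| / (L+1)`. -/
noncomputable def upperBanachDensity (A : Set ℕ) : ℝ :=
  Filter.limsup (fun L : ℕ =>
    ⨆ m : ℕ, ((A ∩ Set.Icc m (m + L)).ncard : ℝ) / (L + 1)) Filter.atTop

/-- `A ⊆ ℕ` is a C-set: a member of an idempotent ultrafilter all of whose members are
J-sets. -/
def IsCSet (A : Set ℕ) : Prop :=
  ∃ p : Ultrafilter ℕ, p + p = p ∧ (∀ B ∈ p, IsJSet B) ∧ A ∈ p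

/-- `A ⊆ ℕ` is a D-set: a member of an idempotent ultrafilter all of whose members have
positive upper Banach density. -/
def IsDSet (A : Set ℕ) : Prop :=
  ∃ p : Ultrafilter ℕ, p + p = p ∧ (∀ B ∈ p, 0 < upperBanachDensity B) ∧ A ∈ p

/-- `A ⊆ ℕ` is a quasi-central set: a member of an idempotent ultrafilter all of whose
members are piecewise syndetic. -/
def IsQuasiCentralSet (A : Set ℕ) : Prop :=
  ∃ p : Ultrafilter ℕ, p + p = p ∧ (∀ B ∈ p, IsPiecewiseSyndetic B) ∧ A ∈ p

/-- The dual family `ess*(F)` of the family of essential `F`-sets. -/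
def essDual (F : Set (Set ℕ)) : Set (Set ℕ) :=
  {B : Set ℕ | ∀ A : Set ℕ, IsEssentialSet F A → (B ∩ A).Nonempty}

/-!
Let `p` be an idempotent ultrafilter all of whose members are J-sets, with `A ∈ p`. The `p`-limit
`x` of `n • α` in the compact group `ℝ/ℤ` satisfies `x + x = x`, so `x = 0`: the set `D` of `n`
with `nα` close to an integer belongs to `p`. On `D` the map `g = g_{α,γ}` is within `ε` of
`n ↦ nα` and therefore additive, so `g(p)` is again idempotent, and it contains `g(A)`.

Each member of `g(p)` contains `g(B)` for a J-set `B ∈ p` with `B ⊆ D`, and `g(B)` is a J-set: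
by compactness of `(ℝ/αℤ)^m`, the given sequences can be cut into consecutive blocks whose sums
are, simultaneously, multiples `Pᵢ(n) α` up to summable errors. The J-set property of `B`,
applied to the sequences `Pᵢ(n)` shifted by a large constant, then yields `bᵢ ∈ B` such that the
numbers `g(bᵢ) - ∑ qᵢ` over the chosen blocks all lie within `1/2` of one real number, hence
coincide.
-/

namespace Ultrafilter

theorem add_self_eq_of_tendsto {M G : Type*} [Add M] [TopologicalSpace G] [T2Space G] [Add G]
    [ContinuousAdd G] {p : Ultrafilter M} (hp : p + p = p) {f : M → G}
    (hf : ∀ a b, f (a + b) = f a + f b) {x : G} (hx : Tendsto f p (𝓝 x)) : x + x = x := by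
  have hsum : Tendsto f ↑(p + p) (𝓝 (x + x)) := by
    intro U hU
    have hU2 : ∀ᶠ y in 𝓝 x, ∀ᶠ z in 𝓝 x, y + z ∈ U := by
      have : ∀ᶠ yz in 𝓝 x ×ˢ 𝓝 x, yz.1 + yz.2 ∈ U := by
        rw [← nhds_prod_eq]; exact continuous_add.tendsto (x, x) hU
      exact this.curry
    show ∀ᶠ a in ↑(p + p), f a ∈ U
    rw [eventually_add]
    filter_upwards [hx.eventually hU2] with a ha
    filter_upwards [hx.eventually ha] with b hb
    rwa [hf]
  rw [hp] at hsum
  exact tendsto_nhds_unique hsum hx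

theorem tendsto_nsmul_zero {G : Type*} [TopologicalSpace G] [T2Space G] [CompactSpace G]
    [AddGroup G] [ContinuousAdd G] {p : Ultrafilter ℕ} (hp : p + p = p) (ξ : G) :
    Tendsto (· • ξ) (p : Filter ℕ) (𝓝 0) := by
  obtain ⟨x, -, hx⟩ := isCompact_univ.ultrafilter_le_nhds (p.map (· • ξ)) (by simp)
  have hx' : Tendsto (· • ξ) (p : Filter ℕ) (𝓝 x) := hx
  rwa [← add_eq_left.mp (add_self_eq_of_tendsto hp (fun a b => add_nsmul ξ a b) hx')]

theorem eventually_abs_mul_sub_round_lt {p : Ultrafilter ℕ} (hp : p + p = p) (α : ℝ) {δ : ℝ}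
    (hδ : 0 < δ) : ∀ᶠ n : ℕ in p, |n * α - round (n * α)| < δ := by
  have h := (tendsto_nsmul_zero hp (α : UnitAddCircle)).norm
  rw [norm_zero] at h
  filter_upwards [h.eventually (gt_mem_nhds hδ)] with n hn
  rwa [← AddCircle.coe_nsmul, UnitAddCircle.norm_eq, nsmul_eq_mul] at hn

theorem map_add_map_eq_map {M N : Type*} [Add M] [Add N] {p : Ultrafilter M} (hp : p + p = p)
    {f : M → N} {D : Set M} (hD : D ∈ p) (hf : ∀ a ∈ D, ∀ b ∈ D, f (a + b) = f a + f b) :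
    p.map f + p.map f = p.map f := by
  refine eq_of_le fun C hC => ?_
  have hC' : ∀ᶠ a in p, f a ∈ C ∧ a ∈ D := Filter.Eventually.and (mem_map.mp hC) hD
  rw [← hp] at hC'
  show ∀ᶠ c in ↑(p.map f + p.map f), c ∈ C
  rw [eventually_add]
  simp only [coe_map, eventually_map]
  filter_upwards [hC', hD] with a ha haD
  filter_upwards [ha, hD] with b hb hbD
  rw [← hf a haD b hbD]
  exact hb.1

end Ultrafilter

theorem gFun_eq_of_abs_sub_le {α γ : ℝ} (hα : 0 ≤ α) (hγ : 0 ≤ γ) {n : ℕ} {K : ℤ}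
    (h₁ : |n * α - K| ≤ γ) (h₂ : |n * α - K| < 1 - γ) : (gFun α γ n : ℤ) = K := by
  rw [gFun, Int.toNat_of_nonneg (Int.floor_nonneg.mpr (by positivity)), Int.floor_eq_iff]
  constructor <;> linarith [abs_le.mp h₁, abs_lt.mp h₂]

theorem gFun_add_of_abs_sub_lt {α γ ε : ℝ} (hα : 0 ≤ α) (hεγ : 2 * ε ≤ γ) (hεγ' : 2 * ε ≤ 1 - γ)
    {m n : ℕ} (hm : |(gFun α γ m : ℝ) - m * α| < ε) (hn : |(gFun α γ n : ℝ) - n * α| < ε) :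
    gFun α γ (m + n) = gFun α γ m + gFun α γ n := by
  have hsum : |((m + n : ℕ) : ℝ) * α - ((gFun α γ m + gFun α γ n : ℕ) : ℤ)| < 2 * ε := by
    push_cast
    rw [abs_sub_comm] at hm hn
    calc _ = |(m * α - gFun α γ m) + (n * α - gFun α γ n)| := by ring_nf
      _ ≤ |m * α - gFun α γ m| + |n * α - gFun α γ n| := abs_add_le _ _
      _ < 2 * ε := by linarith
  have hγ : 0 ≤ γ := by linarith [(abs_nonneg _).trans_lt hm]
  exact_mod_cast gFun_eq_of_abs_sub_le hα hγ (hsum.le.trans hεγ) (hsum.trans_le hεγ')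

theorem eventually_abs_gFun_sub_mul_lt {p : Ultrafilter ℕ} (hp : p + p = p) {α γ ε : ℝ}
    (hα : 0 ≤ α) (hε : 0 < ε) (hεγ : ε ≤ γ) (hεγ' : ε < 1 - γ) :
    ∀ᶠ n : ℕ in p, |(gFun α γ n : ℝ) - n * α| < ε := by
  filter_upwards [Ultrafilter.eventually_abs_mul_sub_round_lt hp α hε] with n hn
  have h := gFun_eq_of_abs_sub_le hα (hε.le.trans hεγ) (hn.le.trans hεγ) (hn.trans hεγ')
  rwa [abs_sub_comm, ← h, Int.cast_natCast] at hn

theorem IsJSet.mono {B C : Set ℕ} (hB : IsJSet B) (h : B ⊆ C) : IsJSet C := by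
  intro m q hq
  obtain ⟨r, hr, s, hs, hmem⟩ := hB m q hq
  exact ⟨r, hr, s, hs, fun i => h (hmem i)⟩

theorem exists_strictMono_dist_succ_lt {X : Type*} [PseudoMetricSpace X] [CompactSpace X]
    (v : ℕ → X) {e : ℕ → ℝ} (he : ∀ n, 0 < e n) :
    ∃ τ : ℕ → ℕ, StrictMono τ ∧ ∀ n, dist (v (τ (n + 1))) (v (τ n)) < e n := by
  obtain ⟨_, φ, hφ, hlim⟩ := CompactSpace.tendsto_subseq v
  obtain ⟨ψ, hψ, hdist⟩ := hlim.cauchySeq.subseq_mem fun n => Metric.dist_mem_uniformity (he n)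
  exact ⟨φ ∘ ψ, hφ.comp hψ, hdist⟩

theorem exists_strictMono_abs_sum_Ico_sub_mul_lt {ι : Type*} [Fintype ι] (q : ι → ℕ → ℕ) {α : ℝ}
    (hα : 0 < α) {e : ℕ → ℝ} (he : ∀ n, 0 < e n) :
    ∃ τ : ℕ → ℕ, StrictMono τ ∧ ∃ P : ι → ℕ → ℕ, ∀ i n,
      |(∑ k ∈ Finset.Ico (τ n) (τ (n + 1)), q i k : ℝ) - P i n * α| < e n := by
  have : Fact (0 < α) := ⟨hα⟩
  obtain ⟨τ, hτ, hdist⟩ := exists_strictMono_dist_succ_lt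
    (fun t i => ((∑ k ∈ Finset.range t, q i k : ℝ) : AddCircle α)) he
  refine ⟨τ, hτ, fun i n => (round (α⁻¹ * ∑ k ∈ Finset.Ico (τ n) (τ (n + 1)), (q i k : ℝ))).toNat,
    fun i n => ?_⟩
  set Q : ℝ := ∑ k ∈ Finset.Ico (τ n) (τ (n + 1)), q i k
  have hround : 0 ≤ round (α⁻¹ * Q) := by
    rw [round_eq]; exact Int.floor_nonneg.mpr (by positivity)
  have hQ :
      Q = ∑ k ∈ Finset.range (τ (n + 1)), (q i k : ℝ) - ∑ k ∈ Finset.range (τ n), (q i k : ℝ) :=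
    Finset.sum_Ico_eq_sub _ (hτ (Nat.lt_succ_self n)).le
  have h := (dist_le_pi_dist _ _ i).trans_lt (hdist n)
  rw [dist_eq_norm, ← AddCircle.coe_sub, ← hQ, AddCircle.norm_eq] at h
  show |Q - ((round (α⁻¹ * Q)).toNat : ℝ) * α| < e n
  rwa [← Int.cast_natCast, Int.toNat_of_nonneg hround]

theorem round_eq_of_abs_sub_lt_half {K : Type*} [Field K] [LinearOrder K] [IsStrictOrderedRing K]
    [FloorRing K] {x : K} {z : ℤ} (h : |(z : K) - x| < 1 / 2) :
    round x = z := by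
  rw [round_eq_iff]
  constructor <;> linarith [abs_lt.mp h]

theorem sum_geometric_half_div_eight_le (F : Finset ℕ) :
    ∑ n ∈ F, (1 / 2 : ℝ) ^ n / 8 ≤ 1 / 4 := by
  have h := summable_geometric_two.sum_le_tsum F fun n _ => by positivity
  rw [tsum_geometric_two] at h
  rw [← Finset.sum_div]
  linarith

theorem IsJSet.image_of_abs_sub_mul_lt {B : Set ℕ} (hB : IsJSet B) {α : ℝ} (hα : 0 < α)
    {f : ℕ → ℕ} (hf : ∀ b ∈ B, |(f b : ℝ) - b * α| < 1 / 4) : IsJSet (f '' B) := by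
  intro m q _
  obtain ⟨τ, hτ, P, hP⟩ := exists_strictMono_abs_sum_Ico_sub_mul_lt q hα
    (e := fun n => (1 / 2) ^ n / 8) fun n => by positivity
  set L := ⌈α⁻¹⌉₊
  have hL : 1 ≤ L * α := by
    rw [← inv_le_iff_one_le_mul₀ hα]; exact Nat.le_ceil _
  have hL0 : 0 < L := Nat.ceil_pos.mpr (inv_pos.mpr hα)
  obtain ⟨r, -, F, hF, hFB⟩ := hB m (fun i n => P i n + L) fun i n => by omega
  set blocks : ℕ → Finset ℕ := fun n => Finset.Ico (τ n) (τ (n + 1))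
  have hdisj : (F : Set ℕ).PairwiseDisjoint blocks := fun a _ b _ hab => by
    simpa [Function.onFun, blocks, ← Finset.disjoint_coe] using
      hτ.monotone.pairwise_disjoint_on_Ico_succ hab
  set c : ℝ := (r + F.card * L) * α
  have hcommon : ∀ i, round c =
      (f (r + ∑ n ∈ F, (P i n + L)) : ℤ) - ∑ k ∈ F.biUnion blocks, (q i k : ℤ) := by
    intro i
    -- each `f bᵢ - ∑ qᵢ` (sum over the chosen blocks) is an integer within `1/2` of `c`
    apply round_eq_of_abs_sub_lt_half
    have hb := hf _ (hFB i)
    have hblocks :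
        |∑ n ∈ F, ∑ k ∈ blocks n, (q i k : ℝ) - (∑ n ∈ F, (P i n : ℝ)) * α| ≤ 1 / 4 :=
      calc _ = |∑ n ∈ F, (∑ k ∈ blocks n, (q i k : ℝ) - P i n * α)| := by
              rw [Finset.sum_sub_distrib, Finset.sum_mul]
        _ ≤ ∑ n ∈ F, (1 / 2 : ℝ) ^ n / 8 :=
              (Finset.abs_sum_le_sum_abs _ _).trans (Finset.sum_le_sum fun n _ => (hP i n).le)
        _ ≤ 1 / 4 := sum_geometric_half_div_eight_le F
    push_cast at hb ⊢
    rw [Finset.sum_biUnion hdisj]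
    calc _ = |((f (r + ∑ n ∈ F, (P i n + L)) : ℝ) - (r + ∑ n ∈ F, ((P i n : ℝ) + L)) * α) -
          (∑ n ∈ F, ∑ k ∈ blocks n, (q i k : ℝ) - (∑ n ∈ F, (P i n : ℝ)) * α)| := by
          simp only [c, Finset.sum_add_distrib, Finset.sum_const, nsmul_eq_mul]
          ring_nf
      _ ≤ _ := abs_sub _ _
      _ < 1 / 2 := by linarith
  have hc : 1 ≤ round c := by
    rw [round_eq, Int.le_floor]
    have : (1 : ℝ) ≤ F.card := by exact_mod_cast hF.card_pos
    push_cast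
    nlinarith [(Nat.cast_nonneg r : (0 : ℝ) ≤ r)]
  refine ⟨(round c).toNat, by omega, F.biUnion blocks, ?_, fun i => ⟨_, hFB i, ?_⟩⟩
  · obtain ⟨n, hn⟩ := hF
    exact ⟨τ n, Finset.mem_biUnion.mpr ⟨n, hn, Finset.mem_Ico.mpr ⟨le_rfl, hτ n.lt_succ_self⟩⟩⟩
  · have := hcommon i
    rw [← Nat.cast_sum] at this
    omega

/-- If `A ⊆ ℕ` is a C-set, then so is `g_{α,γ}(A)` for all `α > 0` and `0 < γ < 1`. -/
theorem cSet_spectra (A : Set ℕ) (hA : IsCSet A) (α γ : ℝ) (hα : 0 < α)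
    (hγ0 : 0 < γ) (hγ1 : γ < 1) : IsCSet (gImage α γ A) := by
  obtain ⟨p, hpp, hpJ, hpA⟩ := hA
  obtain ⟨ε, hε, hεγ, hεγ'⟩ : ∃ ε : ℝ, 0 < ε ∧ 2 * ε ≤ γ ∧ 2 * ε ≤ 1 - γ :=
    ⟨min γ (1 - γ) / 2, half_pos (lt_min hγ0 (sub_pos.mpr hγ1)),
      by linarith [min_le_left γ (1 - γ)], by linarith [min_le_right γ (1 - γ)]⟩
  set D := {n : ℕ | |(gFun α γ n : ℝ) - n * α| < ε}
  have hD : D ∈ p := eventually_abs_gFun_sub_mul_lt hpp hα.le hε (by linarith) (by linarith)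
  have hidem : p.map (gFun α γ) + p.map (gFun α γ) = p.map (gFun α γ) :=
    Ultrafilter.map_add_map_eq_map hpp hD fun _ ha _ hb =>
      gFun_add_of_abs_sub_lt hα.le hεγ hεγ' ha hb
  refine ⟨p.map (gFun α γ), hidem, fun C hC => ?_,
    Ultrafilter.mem_map.mpr (mem_of_superset hpA (subset_preimage_image _ _))⟩
  have hJ : IsJSet (gFun α γ ⁻¹' C ∩ D) := hpJ _ (inter_mem hC hD)
  refine (hJ.image_of_abs_sub_mul_lt hα fun b hb => hb.2.trans_le (by linarith)).mono ?_
  rintro _ ⟨b, hb, rfl⟩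
  exact hb.1
end

section
/- If A ⊆ ℕ is a D-set, then for every α > 0 and every 0 < γ < 1 the set g_{α,γ}(A) = {⌊nα + γ⌋ : n ∈ A} is a D-set. -/
open Set Filter Topology

attribute [local instance] Ultrafilter.add

/-!
Let `p` be an idempotent ultrafilter witnessing that `A` is a D-set. Because `p + p = p`, the
fractional parts of `n α` cluster at `0` along `p`: if `{nα}` and `{(m + n)α}` are both close
to the `p`-limit `x` of `{nα}`, then `nα` is close to an integer. Hence `g_{α,γ}` is additive
on a `p`-large set, which makes the image ultrafilter `g_{α,γ}(p)` idempotent, and it contains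
`g_{α,γ}(A)`. The members of `g_{α,γ}(p)` have positive upper Banach density because `g_{α,γ}`
is monotone, at most `(⌊1/α⌋ + 1)`-to-one, and maps windows of length `L` into windows of
length `O(L)`.
-/

theorem Ultrafilter.map_add_map_of_eventually_add {M N : Type*} [Add M] [Add N] {f : M → N}
    {p : Ultrafilter M}
    (hf : ∀ᶠ m in (p : Filter M), ∀ᶠ n in (p : Filter M), f (m + n) = f m + f n) :
    p.map f + p.map f = (p + p).map f := by
  refine Ultrafilter.eq_of_le fun s hs => ?_
  replace hs : ∀ᶠ m in (p : Filter M), ∀ᶠ n in (p : Filter M), f (m + n) ∈ s :=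
    (Ultrafilter.eventually_add p p _).1 hs
  refine (Ultrafilter.eventually_add _ _ (· ∈ s)).2 ?_
  simp only [Ultrafilter.coe_map, Filter.eventually_map]
  filter_upwards [hf, hs] with m hfm hsm
  filter_upwards [hfm, hsm] with n hfmn hsmn
  rwa [← hfmn]

theorem Ultrafilter.exists_mem_add_mem_of_idempotent {M : Type*} [Add M] {p : Ultrafilter M}
    (hp : p + p = p) {S : Set M} (hS : S ∈ p) : ∃ m ∈ S, {n | m + n ∈ S} ∈ p := by
  have hSS : ∀ᶠ m in (p : Filter M), ∀ᶠ n in (p : Filter M), m + n ∈ S :=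
    (Ultrafilter.eventually_add p p (· ∈ S)).1 (by rwa [hp])
  obtain ⟨m, hmn, hm⟩ := (hSS.and hS).exists
  exact ⟨m, hm, hmn⟩

theorem Ultrafilter.eventually_near_int_of_idempotent {p : Ultrafilter ℕ} (hp : p + p = p) (α : ℝ)
    {ε : ℝ} (hε : 0 < ε) : ∀ᶠ n : ℕ in (p : Filter ℕ), ∃ k : ℤ, |(n : ℝ) * α - k| < ε := by
  obtain ⟨x, -, hx⟩ := (isCompact_Icc (a := (0 : ℝ)) (b := 1)).ultrafilter_le_nhds
    (p.map fun n : ℕ => Int.fract ((n : ℝ) * α)) (Filter.le_principal_iff.2 <|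
      Filter.eventually_map.2 <| .of_forall fun n => ⟨Int.fract_nonneg _, (Int.fract_lt_one _).le⟩)
  obtain ⟨m, hm, hmn⟩ :=
    exists_mem_add_mem_of_idempotent hp (hx (Metric.ball_mem_nhds x (half_pos hε)))
  filter_upwards [hmn] with n hn
  refine ⟨⌊((m + n : ℕ) : ℝ) * α⌋ - ⌊(m : ℝ) * α⌋, ?_⟩
  simp only [Set.mem_preimage, Metric.mem_ball, Real.dist_eq, Int.fract] at hm hn
  push_cast at hn ⊢
  calc |n * α - (⌊(m + n) * α⌋ - ⌊m * α⌋ : ℝ)|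
      = |((m + n) * α - ⌊(m + n) * α⌋ - x) - (m * α - ⌊m * α⌋ - x)| := by ring_nf
    _ ≤ |(m + n) * α - ⌊(m + n) * α⌋ - x| + |m * α - ⌊m * α⌋ - x| := abs_sub _ _
    _ < ε := by linarith

lemma ncard_inter_Icc_le (A : Set ℕ) (m L : ℕ) : (A ∩ Icc m (m + L)).ncard ≤ L + 1 :=
  (Set.ncard_le_ncard Set.inter_subset_right (Set.finite_Icc _ _)).trans (by simp; omega)

lemma bddAbove_range_ncard_inter_Icc_div (A : Set ℕ) (L : ℕ) :
    BddAbove (Set.range fun m : ℕ => ((A ∩ Icc m (m + L)).ncard : ℝ) / (L + 1)) := by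
  refine ⟨1, ?_⟩
  rintro _ ⟨m, rfl⟩
  rw [div_le_one (by positivity)]
  exact_mod_cast ncard_inter_Icc_le A m L

lemma upperBanachDensity_pos_iff (A : Set ℕ) : 0 < upperBanachDensity A ↔
    ∃ δ > (0 : ℝ), ∃ᶠ L in atTop, ∃ m : ℕ, δ * (L + 1) ≤ (A ∩ Icc m (m + L)).ncard := by
  have hbdd : IsBoundedUnder (· ≤ ·) atTop fun L : ℕ =>
      ⨆ m : ℕ, ((A ∩ Icc m (m + L)).ncard : ℝ) / (L + 1) :=
    isBoundedUnder_of ⟨1, fun L => ciSup_le fun m => by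
      rw [div_le_one (by positivity)]; exact_mod_cast ncard_inter_Icc_le A m L⟩
  have hcobdd : IsCoboundedUnder (· ≤ ·) atTop fun L : ℕ =>
      ⨆ m : ℕ, ((A ∩ Icc m (m + L)).ncard : ℝ) / (L + 1) :=
    IsBoundedUnder.isCoboundedUnder_le <| isBoundedUnder_of ⟨0, fun L =>
      (div_nonneg (Nat.cast_nonneg _) (by positivity)).trans
        (le_ciSup (bddAbove_range_ncard_inter_Icc_div A L) 0)⟩
  constructor
  · intro hA
    refine ⟨upperBanachDensity A / 2, half_pos hA, ?_⟩
    refine (frequently_lt_of_lt_limsup hcobdd (half_lt_self hA)).mono fun L hL => ?_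
    obtain ⟨m, hm⟩ := exists_lt_of_lt_ciSup hL
    exact ⟨m, ((lt_div_iff₀ (by positivity)).1 hm).le⟩
  · rintro ⟨δ, hδ, hfreq⟩
    refine hδ.trans_le (le_limsup_of_frequently_le (hfreq.mono fun L ⟨m, hm⟩ => ?_) hbdd)
    exact ((le_div_iff₀ (by positivity)).2 hm).trans
      (le_ciSup (bddAbove_range_ncard_inter_Icc_div A L) m)

lemma Finset.card_filter_eq_le_of_fiber_le {f : ℕ → ℕ} {d : ℕ}
    (hfib : ∀ m n, f m = f n → n ≤ m + d) (s : Finset ℕ) (b : ℕ) :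
    (s.filter (f · = b)).card ≤ d + 1 := by
  rcases (s.filter (f · = b)).eq_empty_or_nonempty with h | h
  · simp [h]
  have hsub : s.filter (f · = b) ⊆ Finset.Icc (Finset.min' _ h) (Finset.min' _ h + d) := by
    intro n hn
    have hmin := (Finset.mem_filter.1 (Finset.min'_mem _ h)).2
    exact Finset.mem_Icc.2 ⟨Finset.min'_le _ n hn,
      hfib _ _ (hmin.trans (Finset.mem_filter.1 hn).2.symm)⟩
  exact (Finset.card_le_card hsub).trans (by simp; omega)

lemma ncard_preimage_inter_Icc_le {f : ℕ → ℕ} (hf : Monotone f) {d : ℕ}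
    (hfib : ∀ m n, f m = f n → n ≤ m + d) (B : Set ℕ) {m L K : ℕ} (hK : f (m + L) ≤ f m + K) :
    (f ⁻¹' B ∩ Icc m (m + L)).ncard ≤ (d + 1) * (B ∩ Icc (f m) (f m + K)).ncard := by
  classical
  have hsrc : f ⁻¹' B ∩ Icc m (m + L) = ↑({n ∈ Finset.Icc m (m + L) | f n ∈ B}) := by
    ext n; simp [and_comm]
  have htgt : B ∩ Icc (f m) (f m + K) = ↑({k ∈ Finset.Icc (f m) (f m + K) | k ∈ B}) := by
    ext k; simp [and_comm]
  rw [hsrc, htgt, Set.ncard_coe_finset, Set.ncard_coe_finset]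
  refine Finset.card_le_mul_card_image_of_maps_to (fun n hn => ?_) _
    fun b _ => Finset.card_filter_eq_le_of_fiber_le hfib _ b
  simp only [Finset.mem_filter, Finset.mem_Icc] at hn ⊢
  exact ⟨⟨hf hn.1.1, (hf hn.1.2).trans hK⟩, hn.2⟩

theorem upperBanachDensity_pos_of_preimage {f : ℕ → ℕ} (hf : Monotone f) {d c : ℕ} (hc : 0 < c)
    (hfib : ∀ m n, f m = f n → n ≤ m + d) (hgrowth : ∀ m L, f (m + L) ≤ f m + c * (L + 1))
    {B : Set ℕ} (hB : 0 < upperBanachDensity (f ⁻¹' B)) : 0 < upperBanachDensity B := by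
  obtain ⟨δ, hδ, hfreq⟩ := (upperBanachDensity_pos_iff _).1 hB
  refine (upperBanachDensity_pos_iff B).2 ⟨δ / ((d + 1) * (c + 1)), by positivity, ?_⟩
  have hK : Tendsto (fun L : ℕ => c * (L + 1)) atTop atTop :=
    tendsto_atTop_mono (fun L => (Nat.le_succ L).trans (Nat.le_mul_of_pos_left _ hc)) tendsto_id
  refine hK.frequently (hfreq.mono fun L ⟨m, hm⟩ => ⟨f m, ?_⟩)
  have hcount : ((f ⁻¹' B ∩ Icc m (m + L)).ncard : ℝ) ≤
      (d + 1) * (B ∩ Icc (f m) (f m + c * (L + 1))).ncard := by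
    exact_mod_cast ncard_preimage_inter_Icc_le hf hfib B (hgrowth m L)
  have hwindow : (c : ℝ) * (L + 1) + 1 ≤ (c + 1) * (L + 1) := by nlinarith
  push_cast
  calc δ / ((d + 1) * (c + 1)) * (c * (L + 1) + 1)
      ≤ δ / ((d + 1) * (c + 1)) * ((c + 1) * (L + 1)) := by gcongr
    _ = δ * (L + 1) / (d + 1) := by field_simp
    _ ≤ (B ∩ Icc (f m) (f m + c * (L + 1))).ncard := by
        rw [div_le_iff₀ (by positivity)]; linarith

lemma Int.floor_add_eq_of_abs_sub_lt {x γ : ℝ} {k : ℤ} (h : |x - k| < min γ (1 - γ)) :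
    ⌊x + γ⌋ = k := by
  rw [abs_sub_lt_iff, lt_min_iff, lt_min_iff] at h
  rw [Int.floor_eq_iff]
  constructor <;> linarith

lemma gFun_eq_natFloor (α γ : ℝ) (n : ℕ) : gFun α γ n = ⌊(n : ℝ) * α + γ⌋₊ := Int.floor_toNat _

lemma gFun_mono {α : ℝ} (hα : 0 ≤ α) (γ : ℝ) : Monotone (gFun α γ) := fun m n hmn => by
  simp only [gFun_eq_natFloor]
  gcongr

lemma gFun_add_le (α γ : ℝ) (m L : ℕ) :
    gFun α γ (m + L) ≤ gFun α γ m + (⌊α⌋₊ + 1) * (L + 1) := by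
  simp only [gFun_eq_natFloor]
  refine Nat.lt_succ_iff.1 ((Nat.floor_lt' (Nat.succ_ne_zero _)).2 ?_)
  have hm := Nat.lt_floor_add_one ((m : ℝ) * α + γ)
  have hα := Nat.lt_floor_add_one α
  push_cast
  nlinarith [(L.cast_nonneg : (0 : ℝ) ≤ L)]

lemma le_add_natFloor_inv_of_gFun_eq {α γ : ℝ} (hα : 0 < α) (hγ : 0 ≤ γ) {m n : ℕ}
    (h : gFun α γ m = gFun α γ n) : n ≤ m + ⌊1 / α⌋₊ := by
  simp only [gFun_eq_natFloor] at h
  have hm := Nat.floor_le (by positivity : 0 ≤ (m : ℝ) * α + γ)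
  have hn := Nat.lt_floor_add_one ((n : ℝ) * α + γ)
  rw [h] at hm
  have hnm : ((n : ℝ) - m) * α < 1 := by linarith
  rcases le_or_gt n m with hle | hlt
  · omega
  have : n - m ≤ ⌊1 / α⌋₊ := Nat.le_floor (by
    rw [le_div_iff₀ hα]; push_cast [hlt.le]; exact hnm.le)
  omega

lemma gFun_add_of_near_int {α γ : ℝ} (hα : 0 ≤ α) (hγ : 0 ≤ γ) {m n : ℕ} {k l : ℤ}
    (hm : |(m : ℝ) * α - k| < min γ (1 - γ) / 2) (hn : |(n : ℝ) * α - l| < min γ (1 - γ) / 2) :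
    gFun α γ (m + n) = gFun α γ m + gFun α γ n := by
  have hδ : 0 ≤ min γ (1 - γ) / 2 := (abs_nonneg _).trans hm.le
  have hk : ⌊(m : ℝ) * α + γ⌋ = k := Int.floor_add_eq_of_abs_sub_lt (by linarith)
  have hl : ⌊(n : ℝ) * α + γ⌋ = l := Int.floor_add_eq_of_abs_sub_lt (by linarith)
  have hkl : ⌊((m + n : ℕ) : ℝ) * α + γ⌋ = k + l := by
    refine Int.floor_add_eq_of_abs_sub_lt ?_
    push_cast
    calc |(m + n) * α - (k + l : ℝ)| = |((m : ℝ) * α - k) + (n * α - l)| := by ring_nf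
      _ ≤ |(m : ℝ) * α - k| + |(n : ℝ) * α - l| := abs_add_le _ _
      _ < min γ (1 - γ) := by linarith
  have hk0 : 0 ≤ k := hk ▸ Int.floor_nonneg.2 (by positivity)
  have hl0 : 0 ≤ l := hl ▸ Int.floor_nonneg.2 (by positivity)
  simp only [gFun, hk, hl, hkl, Int.toNat_add hk0 hl0]

lemma gFun_eventually_add {p : Ultrafilter ℕ} (hp : p + p = p) {α γ : ℝ} (hα : 0 ≤ α)
    (hγ0 : 0 < γ) (hγ1 : γ < 1) :
    ∀ᶠ m in (p : Filter ℕ), ∀ᶠ n in (p : Filter ℕ),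
      gFun α γ (m + n) = gFun α γ m + gFun α γ n := by
  have hnear := Ultrafilter.eventually_near_int_of_idempotent hp α
    (half_pos (lt_min hγ0 (sub_pos.2 hγ1)))
  filter_upwards [hnear] with m ⟨k, hk⟩
  filter_upwards [hnear] with n ⟨l, hl⟩
  exact gFun_add_of_near_int hα hγ0.le hk hl

/-- If `A ⊆ ℕ` is a D-set, then so is `g_{α,γ}(A)` for all `α > 0` and `0 < γ < 1`. -/
theorem dSet_spectra (A : Set ℕ) (hA : IsDSet A) (α γ : ℝ) (hα : 0 < α)
    (hγ0 : 0 < γ) (hγ1 : γ < 1) : IsDSet (gImage α γ A) := by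
  obtain ⟨p, hp, hp_density, hAp⟩ := hA
  refine ⟨p.map (gFun α γ), ?_, fun B hB => ?_,
    Ultrafilter.mem_map.2 (mem_of_superset hAp (subset_preimage_image _ _))⟩
  · rw [Ultrafilter.map_add_map_of_eventually_add (gFun_eventually_add hp hα.le hγ0 hγ1), hp]
  · exact upperBanachDensity_pos_of_preimage (gFun_mono hα.le γ) (Nat.succ_pos _)
      (fun _ _ => le_add_natFloor_inv_of_gFun_eq hα hγ0.le) (gFun_add_le α γ) (hp_density _ hB)
end

section
/- Let F be a Furstenberg family on ℕ and let α > 0. Assume that the collection ess(F) of essential F-sets has the Ramsey property, and that for every A ∈ ess(F) and every 0 < γ < 1 the set g_{α,γ}(A) belongs to F. Then for every invertible dynamical system (X,T), all points x, y ∈ X with x F-strongly proximal to y, and every 0 < γ < 1, the pair (x,y) has the F-suspension-proximality property at level γ for the suspension (Y,F_{α⁻¹}). -/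
open Set Filter Topology

attribute [local instance] Ultrafilter.add

/-!
The return times `A = N((x,y),U×U)` form an essential `F`-set. Colouring `A` by which of `K`
short intervals contains the fractional part of `mα`, the Ramsey property yields an essential
colour class, and inside it an essential set `R` that is additively recurrent: for `m ∈ R` there
is `m'` with `m', m + m' ∈ R`. As `m'α` and `(m + m')α` lie in the same class, `mα` is within
`1/K` of an integer, so `k = ⌊mα + 1/2⌋` satisfies `|k/α - m| < ε`. Hence every element of
`g_{α,1/2}(R) ∈ F` is a return time of the suspension flow: it takes `(x,γ)` and `(y,γ)` to
`T^m x, T^m y ∈ U` with height within `ε` of `γ`.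
-/

lemma retTimes2_mono {X : Type*} (T : X → X) (x y : X) {U V : Set X} (h : U ⊆ V) :
    retTimes2 T x y U ⊆ retTimes2 T x y V :=
  fun _ hn => ⟨hn.1, h hn.2.1, h hn.2.2⟩

namespace HasRamseyProperty

lemma exists_mem_of_biUnion_mem {𝓕 : Set (Set ℕ)} (hR : HasRamseyProperty 𝓕) (h𝓕 : ∅ ∉ 𝓕)
    {ι : Type*} [DecidableEq ι] {s : Finset ι} {C : ι → Set ℕ} (h : ⋃ i ∈ s, C i ∈ 𝓕) :
    ∃ i ∈ s, C i ∈ 𝓕 := by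
  induction s using Finset.induction_on with
  | empty =>
    simp only [Finset.notMem_empty, iUnion_of_empty, iUnion_empty] at h
    exact (h𝓕 h).elim
  | insert a s _ ih =>
    rw [Finset.set_biUnion_insert] at h
    rcases hR _ _ h with ha | hs
    · exact ⟨a, Finset.mem_insert_self a s, ha⟩
    · obtain ⟨i, hi, hCi⟩ := ih hs
      exact ⟨i, Finset.mem_insert_of_mem hi, hCi⟩

end HasRamseyProperty

lemma StronglyProximal.exists_add_mem_retTimes2 {X : Type*} [TopologicalSpace X]
    {F : Set (Set ℕ)} (hF : IsFurstenbergFamily F) {T : X → X} (hT : Continuous T) {x y : X}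
    (hxy : StronglyProximal F T x y) {V : Set X} (hV : IsOpen V) (hyV : y ∈ V) {m : ℕ}
    (hm : m ∈ retTimes2 T x y V) :
    ∃ m' ∈ retTimes2 T x y V, m + m' ∈ retTimes2 T x y V := by
  have hW : IsOpen (V ∩ T^[m] ⁻¹' V) := hV.inter ((hT.iterate m).isOpen_preimage _ hV)
  obtain ⟨m', hm'0, ⟨hxV, hxW⟩, ⟨hyV', hyW⟩⟩ :=
    hF.2.1 _ (hxy _ (hW.mem_nhds ⟨hyV, hm.2.2⟩))
  refine ⟨m', ⟨hm'0, hxV, hyV'⟩, by omega, ?_, ?_⟩ <;>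
    rwa [Function.iterate_add_apply]

namespace IsEssentialSet

variable {F : Set (Set ℕ)} {A : Set ℕ}

lemma nonempty (hF : IsFurstenbergFamily F) (hA : IsEssentialSet F A) : A.Nonempty := by
  obtain ⟨_, _, _, T, -, x, y, hxy, U, hU, hUA⟩ := hA
  exact (hF.2.1 _ (hxy U hU)).mono hUA

lemma exists_recurrent_subset (hF : IsFurstenbergFamily F) (hA : IsEssentialSet F A) :
    ∃ R ⊆ A, IsEssentialSet F R ∧ ∀ m ∈ R, 0 < m ∧ ∃ m' ∈ R, m + m' ∈ R := by
  obtain ⟨X, mX, cX, T, hT, x, y, hxy, U, hU, hUA⟩ := hA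
  have hV : IsOpen (interior U) := isOpen_interior
  have hyV : y ∈ interior U := mem_interior_iff_mem_nhds.mpr hU
  refine ⟨retTimes2 T x y (interior U), (retTimes2_mono T x y interior_subset).trans hUA,
    ⟨X, mX, cX, T, hT, x, y, hxy, _, hV.mem_nhds hyV, subset_rfl⟩, fun m hm => ⟨hm.1, ?_⟩⟩
  exact hxy.exists_add_mem_retTimes2 hF hT hV hyV hm

lemma infinite (hF : IsFurstenbergFamily F) (hA : IsEssentialSet F A) : A.Infinite := by
  obtain ⟨R, hRA, hR, hrec⟩ := hA.exists_recurrent_subset hF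
  refine Set.Infinite.mono hRA fun hfin => ?_
  obtain ⟨m, hm, hmax⟩ := Set.exists_max_image R id hfin (hR.nonempty hF)
  obtain ⟨m', hm', hmm'⟩ := (hrec m hm).2
  have hle : m + m' ≤ m := hmax _ hmm'
  have hpos : 0 < m' := (hrec m' hm').1
  omega

lemma inter_Ioi (hF : IsFurstenbergFamily F)
    (hR : HasRamseyProperty {A : Set ℕ | IsEssentialSet F A}) (hA : IsEssentialSet F A)
    (N : ℕ) : IsEssentialSet F (A ∩ Ioi N) := by
  rw [← inter_union_compl A (Iic N), compl_Iic] at hA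
  refine (hR _ _ hA).resolve_left fun hfin => ?_
  exact hfin.infinite hF ((finite_Iic N).subset inter_subset_right)

end IsEssentialSet

lemma abs_sub_round_lt_of_floor_mul_fract_eq {K a b : ℝ} (hK : 0 < K)
    (h : ⌊K * Int.fract a⌋ = ⌊K * Int.fract b⌋) :
    |(a - b) - round (a - b)| < 1 / K := by
  have hfract : |Int.fract a - Int.fract b| < 1 / K := by
    rw [lt_div_iff₀ hK, ← abs_of_pos hK, ← abs_mul]
    simpa only [mul_sub, mul_comm] using Int.abs_sub_lt_one_of_floor_eq_floor h
  calc |(a - b) - round (a - b)| ≤ |(a - b) - ((⌊a⌋ - ⌊b⌋ : ℤ) : ℝ)| := round_le _ _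
    _ = |Int.fract a - Int.fract b| := by rw [Int.fract, Int.fract]; push_cast; ring_nf
    _ < 1 / K := hfract

lemma IsEssentialSet.exists_subset_abs_sub_round_lt {F : Set (Set ℕ)} {A : Set ℕ}
    (hF : IsFurstenbergFamily F) (hR : HasRamseyProperty {A : Set ℕ | IsEssentialSet F A})
    (hA : IsEssentialSet F A) (α : ℝ) {δ : ℝ} (hδ : 0 < δ) (N : ℕ) :
    ∃ R ⊆ A, IsEssentialSet F R ∧ ∀ m ∈ R, N < m ∧ |(m : ℝ) * α - round ((m : ℝ) * α)| < δ := by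
  obtain ⟨n, hn⟩ := exists_nat_one_div_lt hδ
  set K : ℝ := n + 1
  have hK : 0 < K := by positivity
  let colour : ℕ → ℤ := fun m => ⌊K * Int.fract ((m : ℝ) * α)⌋
  have hcover : A ∩ Ioi N = ⋃ i ∈ Finset.Ico 0 (n + 1 : ℤ), {m ∈ A ∩ Ioi N | colour m = i} := by
    ext m
    simp only [mem_iUnion, mem_ofPred_eq, Finset.mem_Ico, exists_prop]
    refine ⟨fun hm => ⟨colour m, ⟨Int.floor_nonneg.mpr ?_, Int.floor_lt.mpr ?_⟩, hm, rfl⟩,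
      fun ⟨_, _, hm, _⟩ => hm⟩
    · exact mul_nonneg hK.le (Int.fract_nonneg _)
    · push_cast
      exact mul_lt_of_lt_one_right hK (Int.fract_lt_one _)
  have hess := hA.inter_Ioi hF hR N
  rw [hcover] at hess
  obtain ⟨i, -, hi⟩ := hR.exists_mem_of_biUnion_mem (fun h => h.nonempty hF |>.ne_empty rfl) hess
  obtain ⟨R, hRi, hRess, hrec⟩ := IsEssentialSet.exists_recurrent_subset hF hi
  refine ⟨R, fun m hm => (hRi hm).1.1, hRess, fun m hm => ⟨(hRi hm).1.2, ?_⟩⟩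
  obtain ⟨m', hm', hmm'⟩ := (hrec m hm).2
  have hsame : colour (m + m') = colour m' := (hRi hmm').2.trans (hRi hm').2.symm
  calc |(m : ℝ) * α - round ((m : ℝ) * α)|
      = |((m + m' : ℕ) * α - m' * α) - round ((m + m' : ℕ) * α - m' * α)| := by
        push_cast; ring_nf
    _ < 1 / K := abs_sub_round_lt_of_floor_mul_fract_eq hK hsame
    _ < δ := hn

lemma gFun_half_eq_round {α : ℝ} {m : ℕ} (hm : 1 ≤ (m : ℝ) * α) :
    ((gFun α (1 / 2) m : ℕ) : ℤ) = round ((m : ℝ) * α) := by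
  have : (0 : ℝ) ≤ round ((m : ℝ) * α) := by
    linarith [abs_le.mp (abs_sub_round ((m : ℝ) * α))]
  rw [gFun, ← round_eq, Int.toNat_of_nonneg (by exact_mod_cast this)]

lemma gFun_half_pos_and_abs_div_sub_lt {α ε : ℝ} (hα : 0 < α) {m : ℕ} (hm : 1 ≤ (m : ℝ) * α)
    (hround : |(m : ℝ) * α - round ((m : ℝ) * α)| < α * ε) :
    0 < gFun α (1 / 2) m ∧ |(gFun α (1 / 2) m : ℝ) / α - m| < ε := by
  have hk : (gFun α (1 / 2) m : ℝ) = round ((m : ℝ) * α) := by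
    exact_mod_cast gFun_half_eq_round hm
  have hhalf := abs_le.mp (abs_sub_round ((m : ℝ) * α))
  refine ⟨by exact_mod_cast (by linarith : (0 : ℝ) < gFun α (1 / 2) m), ?_⟩
  rw [hk, div_sub' hα.ne', abs_div, abs_of_pos hα, div_lt_iff₀ hα, abs_sub_comm, mul_comm α,
    mul_comm ε]
  exact hround

lemma mem_suspRet_of_abs_div_sub_lt {X : Type*} {T : X → X} {x y : X} {U : Set X}
    {α γ ε : ℝ} (hε : ε < min γ (1 - γ)) {m k : ℕ} (hm : m ∈ retTimes2 T x y U) (hk : 0 < k)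
    (hkm : |(k : ℝ) / α - m| < ε) : k ∈ suspRet T x y U α γ ε := by
  obtain ⟨hγ, hγ'⟩ := lt_min_iff.mp hε
  obtain ⟨hlo, hhi⟩ := abs_lt.mp hkm
  have hfloor : ⌊(k : ℝ) / α + γ⌋ = m := by
    rw [Int.floor_eq_iff]; push_cast; constructor <;> linarith
  simp only [suspRet, hfloor, Int.toNat_natCast, Int.cast_natCast, mem_ofPred_eq]
  exact ⟨hk, hm.2.1, hm.2.2, by linarith, by linarith⟩

/-- Proposition 3.6: if `ess(F)` has the Ramsey property and the spectra `g_{α,γ}` map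
essential `F`-sets into `F`, then strong `F`-proximality lifts to the suspension
`(Y, F_{α⁻¹})` at every level `0 < γ < 1`. -/
theorem spectra_preservation_implies_suspension_lift (F : Set (Set ℕ))
    (hF : IsFurstenbergFamily F)
    (hR : HasRamseyProperty {A : Set ℕ | IsEssentialSet F A}) (α : ℝ) (hα : 0 < α)
    (hpres : ∀ A : Set ℕ, IsEssentialSet F A → ∀ γ : ℝ, 0 < γ → γ < 1 → gImage α γ A ∈ F) :
    ∀ (X : Type) (_ : MetricSpace X) (_ : CompactSpace X) (T : X → X),
      IsHomeomorph T → ∀ x y : X, StronglyProximal F T x y →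
        ∀ γ : ℝ, 0 < γ → γ < 1 → SuspensionProximal F T x y α γ := by
  intro X mX cX T hT x y hxy γ _ _ U hU ε hε hεγ
  have hA : IsEssentialSet F (retTimes2 T x y U) :=
    ⟨X, mX, cX, T, hT.continuous, x, y, hxy, U, hU, subset_rfl⟩
  obtain ⟨R, hRA, hRess, hRbohr⟩ :=
    hA.exists_subset_abs_sub_round_lt hF hR α (mul_pos hα hε) ⌈1 / α⌉₊
  refine hF.2.2 _ _ (hpres R hRess (1 / 2) one_half_pos one_half_lt_one) ?_
  rintro _ ⟨m, hm, rfl⟩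
  obtain ⟨hmN, hmround⟩ := hRbohr m hm
  have hmα : 1 ≤ (m : ℝ) * α := (div_le_iff₀ hα).mp (Nat.lt_of_ceil_lt hmN).le
  obtain ⟨hk, hkm⟩ := gFun_half_pos_and_abs_div_sub_lt hα hmα hmround
  exact mem_suspRet_of_abs_div_sub_lt hεγ (hRA hm) hk hkm
end

section
/- If F is a translation + invariant Furstenberg family on ℕ with the Ramsey property, then the collection ess(F) of essential F-sets has the Ramsey property: whenever A ∪ B is an essential F-set, either A or B is an essential F-set. -/
/-!
The return-time sets `N((x,y),V×V)`, `V ∈ 𝓝 y`, generate a filter all of whose members lie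
in `F`; since `F` is Ramsey, some ultrafilter finer than it still has all its members in `F`.
These ultrafilters form a closed subsemigroup of `(βℕ, +)`: continuity of `T` gives closure
of the return condition, translation invariance that of membership in `F`. By Ellis–Numakura
it contains an idempotent `p`, and one of `A`, `B` lies in `p` since `A ∪ B` does. Finally,
every member `A` of such an idempotent is an essential `F`-set: in the shift on `ℕ → Bool`,
the indicator of `A` is `F`-strongly proximal to its `p`-limit.
-/

open Set Filter Topology

attribute [local instance] Ultrafilter.add

attribute [local instance] Ultrafilter.addSemigroup

section Ultrafilters

variable {F : Set (Set ℕ)}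

theorem exists_ultrafilter_le_forall_mem_of_ramsey (h0 : ∅ ∉ F)
    (hup : ∀ A B : Set ℕ, A ∈ F → A ⊆ B → B ∈ F) (hR : HasRamseyProperty F)
    {G : Filter ℕ} (hG : ∀ s ∈ G, s ∈ F) : ∃ p : Ultrafilter ℕ, ↑p ≤ G ∧ ∀ s ∈ p, s ∈ F := by
  -- the sets whose complement is not in `F` form a filter exactly because `F` is Ramsey
  let D : Filter ℕ := Filter.comk (· ∉ F) h0
    (fun _ ht _ hst hs => ht (hup _ _ hs hst))
    (fun _ hs _ ht hst => (hR _ _ hst).elim hs ht)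
  have : (G ⊓ D).NeBot := by
    refine inf_neBot_iff.mpr fun s hs t ht => nonempty_iff_ne_empty.mpr fun hst => ?_
    exact mem_comk.mp ht (hup _ _ (hG s hs) (subset_compl_iff_disjoint_right.mpr
      (disjoint_iff_inter_eq_empty.mpr hst)))
  refine ⟨Ultrafilter.of (G ⊓ D), (Ultrafilter.of_le _).trans inf_le_left, fun s hs => ?_⟩
  by_contra hsF
  have hsc : sᶜ ∈ D := mem_comk.mpr (by rwa [compl_compl])
  exact Ultrafilter.compl_notMem_iff.mpr hs (Ultrafilter.of_le _ (mem_inf_of_right hsc))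

theorem isClosed_setOf_le_forall_mem {α : Type*} (G : Filter α) (F : Set (Set α)) :
    IsClosed {p : Ultrafilter α | ↑p ≤ G ∧ ∀ s ∈ p, s ∈ F} := by
  have : {p : Ultrafilter α | ↑p ≤ G ∧ ∀ s ∈ p, s ∈ F} =
      (⋂ t ∈ G, {p | t ∈ p}) ∩ ⋂ s ∈ Fᶜ, {p | s ∈ p}ᶜ := by
    ext p
    simp only [mem_inter_iff, mem_iInter, mem_compl_iff]
    exact and_congr Iff.rfl (forall_congr' fun s => not_imp_not.symm)
  rw [this]
  exact (isClosed_biInter fun t _ => ultrafilter_isClosed_basic t).inter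
    (isClosed_biInter fun s _ => (ultrafilter_isOpen_basic s).isClosed_compl)

theorem forall_mem_add_of_translationInvariant
    (hup : ∀ A B : Set ℕ, A ∈ F → A ⊆ B → B ∈ F) (hTI : TranslationInvariant F)
    (p : Ultrafilter ℕ) {q : Ultrafilter ℕ} (hq : ∀ s ∈ q, s ∈ F) : ∀ s ∈ p + q, s ∈ F := by
  intro s hs
  obtain ⟨n, hn⟩ := p.nonempty_of_mem (show {n | {m | n + m ∈ s} ∈ q} ∈ p from hs)
  exact hup _ _ (hTI n _ (hq _ hn)) (by rintro _ ⟨m, hm, rfl⟩; exact hm)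

end Ultrafilters

section ReturnTimes

variable {X : Type*} {T : X → X} {x y : X}

theorem monotone_retTimes2 (T : X → X) (x y : X) : Monotone (retTimes2 T x y) :=
  fun _ _ hVW _ ⟨hn, hx, hy⟩ => ⟨hn, hVW hx, hVW hy⟩

variable [TopologicalSpace X]

variable (T x y) in
def returnFilter : Filter ℕ := (𝓝 y).lift' (retTimes2 T x y)

theorem mem_returnFilter {s : Set ℕ} :
    s ∈ returnFilter T x y ↔ ∃ V ∈ 𝓝 y, retTimes2 T x y V ⊆ s :=
  mem_lift'_sets (monotone_retTimes2 T x y)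

theorem retTimes2_mem_returnFilter {V : Set X} (hV : V ∈ 𝓝 y) :
    retTimes2 T x y V ∈ returnFilter T x y :=
  mem_returnFilter.mpr ⟨V, hV, subset_rfl⟩

theorem StronglyProximal.forall_mem_returnFilter {F : Set (Set ℕ)}
    (hup : ∀ A B : Set ℕ, A ∈ F → A ⊆ B → B ∈ F) (h : StronglyProximal F T x y) :
    ∀ s ∈ returnFilter T x y, s ∈ F := fun _ hs =>
  let ⟨V, hV, hVs⟩ := mem_returnFilter.mp hs
  hup _ _ (h V hV) hVs

theorem add_le_returnFilter (hT : Continuous T) {p q : Ultrafilter ℕ}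
    (hp : ↑p ≤ returnFilter T x y) (hq : ↑q ≤ returnFilter T x y) :
    ↑(p + q) ≤ returnFilter T x y := by
  intro s hs
  obtain ⟨V, hV, hVs⟩ := mem_returnFilter.mp hs
  show {n | {m | n + m ∈ s} ∈ q} ∈ p
  filter_upwards [hp (retTimes2_mem_returnFilter (interior_mem_nhds.mpr hV))]
    with n ⟨_, _, hny⟩
  have hW : T^[n] ⁻¹' interior V ∈ 𝓝 y :=
    (hT.iterate n).continuousAt.preimage_mem_nhds (isOpen_interior.mem_nhds hny)
  filter_upwards [hq (retTimes2_mem_returnFilter hW)] with m ⟨hm, hmx, hmy⟩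
  refine hVs ⟨by omega, ?_, ?_⟩ <;> rw [Function.iterate_add_apply] <;>
    exact interior_subset ‹_›

end ReturnTimes

section Idempotent

variable {X : Type*} [TopologicalSpace X] {T : X → X} {p : Ultrafilter ℕ} {x y : X}

theorem tendsto_iterate_of_add_self_eq [RegularSpace X] (hT : Continuous T) (hp : p + p = p)
    (h : Tendsto (fun n => T^[n] x) p (𝓝 y)) : Tendsto (fun n => T^[n] y) p (𝓝 y) := by
  -- `T^[n] y` is the `p`-limit in `m` of `T^[n + m] x`, and `p + p = p` puts `T^[n + m] x`
  -- into `V` for `p`-many `n` and then `p`-many `m`; closedness of `V` passes to the limit.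
  refine (closed_nhds_basis y).tendsto_right_iff.mpr fun V ⟨hV, hVc⟩ => ?_
  have hpp : {n | T^[n] x ∈ V} ∈ p + p := hp.symm ▸ h hV
  filter_upwards [show {n | {m | T^[n + m] x ∈ V} ∈ p} ∈ p from hpp] with n hn
  refine hVc.mem_of_tendsto (((hT.iterate n).tendsto y).comp h) ?_
  filter_upwards [hn] with m hm
  rwa [Function.iterate_add_apply] at hm

theorem retTimes2_mem_of_add_self_eq [RegularSpace X] (hT : Continuous T) (hp : p + p = p)
    (hpos : {n | 0 < n} ∈ p) (h : Tendsto (fun n => T^[n] x) p (𝓝 y)) {V : Set X}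
    (hV : V ∈ 𝓝 y) : retTimes2 T x y V ∈ p :=
  inter_mem hpos (inter_mem (h hV) (tendsto_iterate_of_add_self_eq hT hp h hV))

def seqShift {α : Type*} (z : ℕ → α) : ℕ → α := fun i => z (i + 1)

theorem continuous_seqShift {α : Type*} [TopologicalSpace α] :
    Continuous (seqShift : (ℕ → α) → ℕ → α) :=
  continuous_pi fun i => continuous_apply (i + 1)

theorem iterate_seqShift_apply {α : Type*} (n : ℕ) (z : ℕ → α) (i : ℕ) :
    seqShift^[n] z i = z (i + n) := by
  induction n generalizing z with
  | zero => rfl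
  | succ n ih => rw [Function.iterate_succ_apply, ih]; rfl

theorem isEssentialSet_of_mem_of_add_self_eq {F : Set (Set ℕ)} (hp : p + p = p)
    (hpF : ∀ s ∈ p, s ∈ F) (hpos : {n | 0 < n} ∈ p) {A : Set ℕ} (hA : A ∈ p) :
    IsEssentialSet F A := by
  classical
  let z : ℕ → Bool := fun n => decide (n ∈ A)
  let w : ℕ → Bool := (p.map fun n => seqShift^[n] z).lim
  have hw : Tendsto (fun n => seqShift^[n] z) p (𝓝 w) := Ultrafilter.le_nhds_lim _
  have hw0 : w 0 = true := by
    have hlim := ((continuous_apply 0).tendsto w).comp hw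
    refine tendsto_nhds_unique hlim (tendsto_const_nhds.congr' ?_)
    filter_upwards [hA] with n hn
    simp [iterate_seqShift_apply, z, hn]
  let _ : MetricSpace (ℕ → Bool) := TopologicalSpace.metrizableSpaceMetric _
  refine ⟨ℕ → Bool, inferInstance, inferInstance, seqShift, continuous_seqShift, z, w,
    fun V hV => hpF _ (retTimes2_mem_of_add_self_eq continuous_seqShift hp hpos hw hV),
    (· 0) ⁻¹' {true}, ((isOpen_discrete _).preimage (continuous_apply 0)).mem_nhds hw0, ?_⟩
  rintro n ⟨-, hn, -⟩
  simpa [iterate_seqShift_apply, z] using hn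

end Idempotent

/-- Corollary 3.8: if `F` is a translation `+` invariant Furstenberg family with the Ramsey
property, then `ess(F)` has the Ramsey property. -/
theorem essentialSets_ramsey (F : Set (Set ℕ)) (hF : IsFurstenbergFamily F)
    (hTI : TranslationInvariant F) (hR : HasRamseyProperty F) :
    HasRamseyProperty {A : Set ℕ | IsEssentialSet F A} := by
  obtain ⟨-, hne, hup⟩ := hF
  rintro A B ⟨X, _, _, T, hT, x, y, hxy, U, hU, hUAB⟩
  let C := {p : Ultrafilter ℕ | ↑p ≤ returnFilter T x y ∧ ∀ s ∈ p, s ∈ F}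
  have hC : C.Nonempty := exists_ultrafilter_le_forall_mem_of_ramsey
    (fun h => not_nonempty_empty (hne _ h)) hup hR (hxy.forall_mem_returnFilter hup)
  obtain ⟨p, ⟨hpG, hpF⟩, hpp⟩ := exists_idempotent_in_compact_add_subsemigroup
    Ultrafilter.continuous_add_left C hC (isClosed_setOf_le_forall_mem _ F).isCompact
    fun p hp q hq => ⟨add_le_returnFilter hT hp.1 hq.1,
      forall_mem_add_of_translationInvariant hup hTI p hq.2⟩
  have hUp : retTimes2 T x y U ∈ p := hpG (retTimes2_mem_returnFilter hU)
  have hpos : {n | 0 < n} ∈ p := mem_of_superset hUp fun _ hn => hn.1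
  exact (Ultrafilter.union_mem_iff.mp (mem_of_superset hUp hUAB)).imp
    (isEssentialSet_of_mem_of_add_self_eq hpp hpF hpos)
    (isEssentialSet_of_mem_of_add_self_eq hpp hpF hpos)
end
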